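/- arXiv:2310.11880 — 6 statements merged into one kernel-verified Lean document; each statement's English description precedes it below -/
import Mathlib

section
/- Let (x_t)_{t=1}^T and (x⋆_t)_{t=1}^T be sequences in ℝ^d satisfying ‖x_t - x⋆_{t-1}‖² ≤ (1/4)‖x_{t-1} - x⋆_{t-1}‖² for all 2 ≤ t ≤ T. Then ∑_{t=1}^T ‖x_t - x⋆_t‖² ≤ 2‖x_1 - x⋆_1‖² + 4 ∑_{t=2}^T ‖x⋆_t - x⋆_{t-1}‖². -/
lemma aux_sq_bound (d : ℕ) (x xstar : ℕ → EuclideanSpace ℝ (Fin d)) :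
    ∀ N, 1 ≤ N →
    (∀ t, 2 ≤ t → t ≤ N → ‖x t - xstar (t - 1)‖ ^ 2 ≤ (1 / 4) * ‖x (t - 1) - xstar (t - 1)‖ ^ 2) →
    ∑ t ∈ Finset.Icc 1 N, ‖x t - xstar t‖ ^ 2 + ‖x N - xstar N‖ ^ 2 ≤
      2 * ‖x 1 - xstar 1‖ ^ 2 + 4 * ∑ t ∈ Finset.Icc 2 N, ‖xstar t - xstar (t - 1)‖ ^ 2 := by
  intro N hN
  induction N, hN using Nat.le_induction with
  | base =>
    intro h
    simp
    nlinarith [sq_nonneg ‖x 1 - xstar 1‖]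
  | succ N hN ih =>
    intro h
    have ih' := ih (fun t h2 hle => h t h2 (by omega))
    rw [Finset.sum_Icc_succ_top (by omega : 1 ≤ N + 1),
        Finset.sum_Icc_succ_top (by omega : 2 ≤ N + 1)]
    have h1 := h (N + 1) (by omega) le_rfl
    simp only [Nat.add_sub_cancel] at h1 ⊢
    have htri : ‖x (N + 1) - xstar (N + 1)‖ ≤ ‖x (N + 1) - xstar N‖ + ‖xstar (N + 1) - xstar N‖ := by
      have he : x (N + 1) - xstar (N + 1) = (x (N + 1) - xstar N) - (xstar (N + 1) - xstar N) := by
        abel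
      rw [he]; exact norm_sub_le _ _
    have hkey : ‖x (N + 1) - xstar (N + 1)‖ ^ 2 ≤
        (1 / 2) * ‖x N - xstar N‖ ^ 2 + 2 * ‖xstar (N + 1) - xstar N‖ ^ 2 := by
      nlinarith [norm_nonneg (x (N + 1) - xstar (N + 1)),
        norm_nonneg (x (N + 1) - xstar N), norm_nonneg (xstar (N + 1) - xstar N),
        sq_nonneg (‖x (N + 1) - xstar N‖ - ‖xstar (N + 1) - xstar N‖)]
    linarith

theorem squared_distance_bound
    (d T : ℕ)
    (x xstar : ℕ → EuclideanSpace ℝ (Fin d))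
    (hcontr : ∀ t, 2 ≤ t → t ≤ T →
      ‖x t - xstar (t - 1)‖ ^ 2 ≤ (1 / 4) * ‖x (t - 1) - xstar (t - 1)‖ ^ 2) :
    ∑ t ∈ Finset.Icc 1 T, ‖x t - xstar t‖ ^ 2 ≤
      2 * ‖x 1 - xstar 1‖ ^ 2 + 4 * ∑ t ∈ Finset.Icc 2 T, ‖xstar t - xstar (t - 1)‖ ^ 2 := by
  rcases Nat.eq_zero_or_pos T with hT | hT
  · subst hT
    simp
  · have := aux_sq_bound d x xstar T hT hcontr
    nlinarith [sq_nonneg ‖x T - xstar T‖]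
end

section
/- Let (x_t)_{t=0}^T and (x⋆_t)_{t=1}^T be sequences in ℝ^d with x_1 = x_0 and ‖x_t - x⋆_{t-1}‖² ≤ (1/4)‖x_{t-1} - x⋆_{t-1}‖² for all 2 ≤ t ≤ T. Then the total quadratic switching cost satisfies ∑_{t=1}^T (1/2)‖x_t - x_{t-1}‖² ≤ 5‖x_1 - x⋆_1‖² + 10 ∑_{t=2}^T ‖x⋆_t - x⋆_{t-1}‖². -/
private lemma sq_add_le {d : ℕ} (a b : EuclideanSpace ℝ (Fin d)) :
    ‖a + b‖ ^ 2 ≤ 2 * ‖a‖ ^ 2 + 2 * ‖b‖ ^ 2 := by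
  have h := norm_add_le a b
  nlinarith [h, sq_nonneg (‖a‖ - ‖b‖), norm_nonneg a, norm_nonneg b, norm_nonneg (a + b)]

private lemma aux (d : ℕ) (x xstar : ℕ → EuclideanSpace ℝ (Fin d))
    (hx1 : x 1 = x 0) :
    ∀ N, 1 ≤ N → (∀ t, 2 ≤ t → t ≤ N →
      ‖x t - xstar (t - 1)‖ ^ 2 ≤ (1 / 4) * ‖x (t - 1) - xstar (t - 1)‖ ^ 2) →
    ∑ t ∈ Finset.Icc 1 N, (1 / 2) * ‖x t - x (t - 1)‖ ^ 2
      + (5 / 2) * ‖x N - xstar N‖ ^ 2 ≤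
      5 * ‖x 1 - xstar 1‖ ^ 2 + 10 * ∑ t ∈ Finset.Icc 2 N, ‖xstar t - xstar (t - 1)‖ ^ 2 := by
  intro N hN
  induction N, hN using Nat.le_induction with
  | base =>
    intro _
    simp [hx1]
    nlinarith [sq_nonneg ‖x 1 - xstar 1‖]
  | succ N hN ih =>
    intro hc
    have ihh := ih (fun t h2 hle => hc t h2 (le_trans hle (Nat.le_succ N)))
    rw [Finset.sum_Icc_succ_top (by omega : 1 ≤ N + 1),
        Finset.sum_Icc_succ_top (by omega : 2 ≤ N + 1)]
    have hns : N + 1 - 1 = N := by omega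
    rw [hns]
    have hcN : ‖x (N + 1) - xstar N‖ ^ 2 ≤ (1 / 4) * ‖x N - xstar N‖ ^ 2 := by
      have := hc (N + 1) (by omega) le_rfl
      rwa [hns] at this
    -- ‖x (N+1) - x N‖² ≤ 2 b + 2 c
    have h1 : ‖x (N + 1) - x N‖ ^ 2 ≤
        2 * ‖x (N + 1) - xstar N‖ ^ 2 + 2 * ‖x N - xstar N‖ ^ 2 := by
      have := sq_add_le (x (N + 1) - xstar N) (xstar N - x N)
      have he : x (N + 1) - xstar N + (xstar N - x N) = x (N + 1) - x N := by abel
      rw [he] at this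
      rwa [norm_sub_rev (xstar N) (x N)] at this
    have h2 : ‖x (N + 1) - xstar (N + 1)‖ ^ 2 ≤
        2 * ‖x (N + 1) - xstar N‖ ^ 2 + 2 * ‖xstar (N + 1) - xstar N‖ ^ 2 := by
      have := sq_add_le (x (N + 1) - xstar N) (xstar N - xstar (N + 1))
      have he : x (N + 1) - xstar N + (xstar N - xstar (N + 1)) = x (N + 1) - xstar (N + 1) := by
        abel
      rw [he] at this
      rwa [norm_sub_rev (xstar N) (xstar (N + 1))] at this
    nlinarith [sq_nonneg ‖x N - xstar N‖, sq_nonneg ‖x (N + 1) - xstar N‖]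

theorem quadratic_switching_cost_bound
    (d T : ℕ)
    (x xstar : ℕ → EuclideanSpace ℝ (Fin d))
    (hx1 : x 1 = x 0)
    (hcontr : ∀ t, 2 ≤ t → t ≤ T →
      ‖x t - xstar (t - 1)‖ ^ 2 ≤ (1 / 4) * ‖x (t - 1) - xstar (t - 1)‖ ^ 2) :
    ∑ t ∈ Finset.Icc 1 T, (1 / 2) * ‖x t - x (t - 1)‖ ^ 2 ≤
      5 * ‖x 1 - xstar 1‖ ^ 2 + 10 * ∑ t ∈ Finset.Icc 2 T, ‖xstar t - xstar (t - 1)‖ ^ 2 := by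
  rcases Nat.eq_zero_or_pos T with rfl | hT
  · simp only [show Finset.Icc 1 0 = ∅ from rfl, show Finset.Icc 2 0 = ∅ from rfl,
      Finset.sum_empty, mul_zero, add_zero]
    positivity
  · have h := aux d x xstar hx1 T hT hcontr
    nlinarith [sq_nonneg ‖x T - xstar T‖]
end

section
/- Let (x_t)_{t=0}^T and (x⋆_t)_{t=1}^T be sequences in ℝ^d with x_1 = x_0 and ‖x_t - x⋆_{t-1}‖ ≤ (1/2)‖x_{t-1} - x⋆_{t-1}‖ for all 2 ≤ t ≤ T. Then ∑_{t=1}^T ‖x_t - x⋆_t‖ ≤ 2‖x_1 - x⋆_1‖ + 2 ∑_{t=2}^T ‖x⋆_t - x⋆_{t-1}‖. -/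
lemma distance_sum_bound_aux (d : ℕ) (x xstar : ℕ → EuclideanSpace ℝ (Fin d)) :
    ∀ T, 1 ≤ T →
    (∀ t, 2 ≤ t → t ≤ T → ‖x t - xstar (t - 1)‖ ≤ (1 / 2) * ‖x (t - 1) - xstar (t - 1)‖) →
    ∑ t ∈ Finset.Icc 1 T, ‖x t - xstar t‖ + ‖x T - xstar T‖ ≤
      2 * ‖x 1 - xstar 1‖ + 2 * ∑ t ∈ Finset.Icc 2 T, ‖xstar t - xstar (t - 1)‖ := by
  intro T
  induction T with
  | zero => omega
  | succ n ih =>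
    intro h1 hc
    rcases eq_or_lt_of_le h1 with heq | hlt
    · have hn0 : n = 0 := by omega
      subst hn0
      simp
      linarith [norm_nonneg (x 1 - xstar 1)]
    · have hn : 1 ≤ n := by omega
      have IH := ih hn (fun t ht htn => hc t ht (by omega))
      rw [Finset.sum_Icc_succ_top (by omega : 1 ≤ n + 1),
          Finset.sum_Icc_succ_top (by omega : 2 ≤ n + 1)]
      have hstep := hc (n + 1) (by omega) le_rfl
      simp only [Nat.add_sub_cancel] at hstep ⊢
      have htri : ‖x (n + 1) - xstar (n + 1)‖ ≤
          ‖x (n + 1) - xstar n‖ + ‖xstar (n + 1) - xstar n‖ := by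
        have h := norm_sub_le (x (n + 1) - xstar n) (xstar (n + 1) - xstar n)
        have he : (x (n + 1) - xstar n) - (xstar (n + 1) - xstar n)
            = x (n + 1) - xstar (n + 1) := by abel
        rw [he] at h
        linarith
      linarith

theorem distance_sum_bound
    (d T : ℕ)
    (x xstar : ℕ → EuclideanSpace ℝ (Fin d))
    (hx1 : x 1 = x 0)
    (hcontr : ∀ t, 2 ≤ t → t ≤ T →
      ‖x t - xstar (t - 1)‖ ≤ (1 / 2) * ‖x (t - 1) - xstar (t - 1)‖) :
    ∑ t ∈ Finset.Icc 1 T, ‖x t - xstar t‖ ≤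
      2 * ‖x 1 - xstar 1‖ + 2 * ∑ t ∈ Finset.Icc 2 T, ‖xstar t - xstar (t - 1)‖ := by
  rcases Nat.eq_zero_or_pos T with h0 | hT
  · subst h0
    simp
  · have := distance_sum_bound_aux d x xstar T hT hcontr
    linarith [norm_nonneg (x T - xstar T)]
end

section
/- Let (x_t)_{t=0}^T and (x⋆_t)_{t=1}^T be sequences in ℝ^d with x_1 = x_0 and ‖x_t - x⋆_{t-1}‖ ≤ (1/2)‖x_{t-1} - x⋆_{t-1}‖ for all 2 ≤ t ≤ T. Then the total linear switching cost satisfies ∑_{t=2}^T ‖x_t - x_{t-1}‖ ≤ 3‖x_1 - x⋆_1‖ + 3 ∑_{t=2}^T ‖x⋆_t - x⋆_{t-1}‖. -/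
theorem linear_switching_cost_bound
    (d T : ℕ)
    (x xstar : ℕ → EuclideanSpace ℝ (Fin d))
    (hx1 : x 1 = x 0)
    (hcontr : ∀ t, 2 ≤ t → t ≤ T →
      ‖x t - xstar (t - 1)‖ ≤ (1 / 2) * ‖x (t - 1) - xstar (t - 1)‖) :
    ∑ t ∈ Finset.Icc 2 T, ‖x t - x (t - 1)‖ ≤
      3 * ‖x 1 - xstar 1‖ + 3 * ∑ t ∈ Finset.Icc 2 T, ‖xstar t - xstar (t - 1)‖ := by
  rcases le_or_gt T 1 with hT | hT
  · rw [Finset.Icc_eq_empty (by omega)]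
    simp only [Finset.sum_empty, mul_zero, add_zero]
    positivity
  · have key : ∀ N, 1 ≤ N → N ≤ T →
        ∑ t ∈ Finset.Icc 2 N, ‖x t - x (t - 1)‖ + 3 * ‖x N - xstar N‖ ≤
        3 * ‖x 1 - xstar 1‖ + 3 * ∑ t ∈ Finset.Icc 2 N, ‖xstar t - xstar (t - 1)‖ := by
      intro N
      induction N with
      | zero => omega
      | succ n ih =>
        intro h1 h2
        rcases Nat.lt_or_ge n 1 with hn | hn
        · interval_cases n
          rw [Finset.Icc_eq_empty (by omega)]
          simp
        · have hih := ih hn (le_trans (Nat.le_succ n) h2)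
          have h2n : 2 ≤ n + 1 := by omega
          rw [Finset.sum_Icc_succ_top h2n, Finset.sum_Icc_succ_top h2n]
          have hc := hcontr (n + 1) h2n h2
          simp only [Nat.add_sub_cancel] at hc ⊢
          have t1 : ‖x (n + 1) - x n‖ ≤ ‖x (n + 1) - xstar n‖ + ‖x n - xstar n‖ := by
            have h := norm_add_le (x (n + 1) - xstar n) (xstar n - x n)
            rw [sub_add_sub_cancel] at h
            rw [norm_sub_rev (xstar n) (x n)] at h
            exact h
          have t2 : ‖x (n + 1) - xstar (n + 1)‖ ≤
              ‖x (n + 1) - xstar n‖ + ‖xstar (n + 1) - xstar n‖ := by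
            have h := norm_add_le (x (n + 1) - xstar n) (xstar n - xstar (n + 1))
            rw [sub_add_sub_cancel] at h
            rw [norm_sub_rev (xstar n) (xstar (n + 1))] at h
            exact h
          linarith
    have hfin := key T (by omega) le_rfl
    have := norm_nonneg (x T - xstar T)
    linarith
end

section
/- Let μ > 0, x⋆ ∈ ℝ^T, and B the T×T tridiagonal matrix with diagonal (2,…,2,1) and off-diagonals -1. Then min over x ∈ ℝ^T of [(μ/2)‖x - x⋆‖² + (1/2) x^T B x] ≥ (μ/(2(μ+4))) x⋆^T B x⋆ = (μ/(2(μ+4))) ∑_{t=1}^T (x⋆_t - x⋆_{t-1})² with x⋆_0 = 0. -/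
/-!
Extend `x ∈ ℝ^T` to `e : ℕ → ℝ` with `e 0 = 0` and `e (t + 1) = x t`. Then `B` is `DᵀD` for the
difference operator `(D x) t = e (t + 1) - e t`, so `xᵀ B x = ‖D x‖²`, and `‖D‖ ≤ 2`. With
`a = D x⋆`, `b = D x` and `d = x - x⋆`, the pointwise identity
`(μ + 4) b² + μ (μ + 4) / 4 (b - a)² = μ a² + (2 b + μ (b - a) / 2)²` and `‖b - a‖² = ‖D d‖² ≤ 4 ‖d‖²`
give the bound; this is the Loewner bound `I - μ (B + μ I)⁻¹ ⪰ B / (μ + 4)` without inverting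
`B + μ I`.
-/

open Finset Matrix

noncomputable def switchingCostMatrix (T : ℕ) : Matrix (Fin T) (Fin T) ℝ :=
  Matrix.of fun i j =>
    if i = j then (if (i : ℕ) = T - 1 then 1 else 2)
    else if (i : ℕ) + 1 = (j : ℕ) ∨ (j : ℕ) + 1 = (i : ℕ) then -1 else 0

theorem exists_eq_comp_add_one {T : ℕ} (x : Fin T → ℝ) :
    ∃ e : ℕ → ℝ, e 0 = 0 ∧ x = fun j : Fin T => e ((j : ℕ) + 1) := by
  have hinj : Function.Injective fun j : Fin T => (j : ℕ) + 1 := fun a b h => by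
    simpa [Fin.ext_iff] using h
  refine ⟨Function.extend (fun j : Fin T => (j : ℕ) + 1) x 0, ?_, ?_⟩
  · exact Function.extend_apply' _ _ _ fun ⟨j, hj⟩ => Nat.succ_ne_zero _ hj
  · exact funext fun j => (hinj.extend_apply x 0 j).symm

theorem sum_range_ite_add_one_eq {M : Type*} [AddCommMonoid M] {T i : ℕ} (hi : i ≤ T)
    (f : ℕ → M) (hf : f 0 = 0) :
    ∑ n ∈ range T, (if n + 1 = i then f (n + 1) else 0) = f i := by
  cases i with
  | zero => simp [hf]
  | succ k => simp [sum_ite_eq', Nat.lt_of_succ_le hi]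

theorem switchingCostMatrix_mulVec {T : ℕ} (e : ℕ → ℝ) (he : e 0 = 0) (i : Fin T) :
    (switchingCostMatrix T *ᵥ fun j => e ((j : ℕ) + 1)) i =
      (e (i + 1) - e i) - if (i : ℕ) + 1 < T then e (i + 2) - e (i + 1) else 0 := by
  obtain ⟨i, hi⟩ := i
  have hrow : ∀ n, (if i = n then (if i = T - 1 then 1 else 2)
        else if i + 1 = n ∨ n + 1 = i then -1 else 0) * e (n + 1) =
      (if n = i then (if i = T - 1 then 1 else 2) * e (n + 1) else 0)
        - (if n = i + 1 then e (n + 1) else 0) - (if n + 1 = i then e (n + 1) else 0) := by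
    intro n
    split_ifs <;> first | omega | ring
  simp only [mulVec, dotProduct, switchingCostMatrix, of_apply, Fin.ext_iff]
  rw [Fin.sum_univ_eq_sum_range (fun n => (if i = n then (if i = T - 1 then 1 else 2)
        else if i + 1 = n ∨ n + 1 = i then -1 else 0) * e (n + 1)) T]
  simp only [hrow, sum_sub_distrib, sum_ite_eq', mem_range, sum_range_ite_add_one_eq hi.le e he]
  split_ifs <;> first | omega | ring

theorem sum_mul_sub_sub_eq_sum_sq {R : Type*} [CommRing R] {T : ℕ} (e : ℕ → R) (he : e 0 = 0) :
    ∑ t ∈ range T,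
        e (t + 1) * ((e (t + 1) - e t) - if t + 1 < T then e (t + 2) - e (t + 1) else 0) =
      ∑ t ∈ range T, (e (t + 1) - e t) ^ 2 := by
  have hshift : ∑ t ∈ range T, (if t + 1 < T then e (t + 1) * (e (t + 2) - e (t + 1)) else 0) =
      ∑ t ∈ range T, e t * (e (t + 1) - e t) := by
    cases T with
    | zero => simp
    | succ S =>
      rw [sum_range_succ, sum_range_succ' (fun t => e t * (e (t + 1) - e t)), he]
      simp +contextual [sum_ite_of_true]
  calc _ = ∑ t ∈ range T, e (t + 1) * (e (t + 1) - e t)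
        - ∑ t ∈ range T, (if t + 1 < T then e (t + 1) * (e (t + 2) - e (t + 1)) else 0) := by
        rw [← sum_sub_distrib]
        refine sum_congr rfl fun t _ => ?_
        split_ifs <;> ring
    _ = _ := by
        rw [hshift, ← sum_sub_distrib]
        exact sum_congr rfl fun t _ => by ring

theorem dotProduct_switchingCostMatrix_mulVec {T : ℕ} (e : ℕ → ℝ) (he : e 0 = 0) :
    (fun j : Fin T => e ((j : ℕ) + 1)) ⬝ᵥ (switchingCostMatrix T *ᵥ fun j => e ((j : ℕ) + 1)) =
      ∑ t ∈ range T, (e (t + 1) - e t) ^ 2 := by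
  simp only [dotProduct, switchingCostMatrix_mulVec e he]
  exact (Fin.sum_univ_eq_sum_range _ T).trans (sum_mul_sub_sub_eq_sum_sq e he)

theorem sum_sq_sub_le_four_mul_sum_sq {R : Type*} [CommRing R] [LinearOrder R]
    [IsStrictOrderedRing R] (T : ℕ) (f : ℕ → R) (hf : f 0 = 0) :
    ∑ t ∈ range T, (f (t + 1) - f t) ^ 2 ≤ 4 * ∑ t ∈ range T, f (t + 1) ^ 2 := by
  have hshift : ∑ t ∈ range T, f t ^ 2 ≤ ∑ t ∈ range T, f (t + 1) ^ 2 := by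
    have h := sum_range_succ' (fun t => f t ^ 2) T
    rw [sum_range_succ, hf] at h
    nlinarith [sq_nonneg (f T)]
  calc ∑ t ∈ range T, (f (t + 1) - f t) ^ 2
      ≤ ∑ t ∈ range T, (2 * f (t + 1) ^ 2 + 2 * f t ^ 2) :=
        sum_le_sum fun t _ => by nlinarith [sq_nonneg (f (t + 1) + f t)]
    _ ≤ 4 * ∑ t ∈ range T, f (t + 1) ^ 2 := by
        rw [sum_add_distrib, ← mul_sum, ← mul_sum]
        linarith

theorem mul_sum_sq_le_of_sum_sq_sub_le {ι : Type*} (s : Finset ι) {μ W : ℝ} (hμ : 0 < μ)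
    (a b : ι → ℝ) (h : ∑ i ∈ s, (b i - a i) ^ 2 ≤ 4 * W) :
    μ / (2 * (μ + 4)) * ∑ i ∈ s, a i ^ 2 ≤ μ / 2 * W + 1 / 2 * ∑ i ∈ s, b i ^ 2 := by
  have hpoint : μ * ∑ i ∈ s, a i ^ 2 ≤
      (μ + 4) * ∑ i ∈ s, b i ^ 2 + μ * (μ + 4) / 4 * ∑ i ∈ s, (b i - a i) ^ 2 := by
    simp only [mul_sum, ← sum_add_distrib]
    exact sum_le_sum fun i _ => by nlinarith [sq_nonneg (2 * b i + μ / 2 * (b i - a i))]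
  have hμ4 : 0 < μ + 4 := by linarith
  rw [div_mul_eq_mul_div, div_le_iff₀ (by positivity)]
  nlinarith [mul_le_mul_of_nonneg_left h (by positivity : 0 ≤ μ * (μ + 4) / 4)]

theorem quadratic_min_lower_bound
    (T : ℕ) (μ : ℝ) (hμ : 0 < μ)
    (B : Matrix (Fin T) (Fin T) ℝ)
    (hB : ∀ i j : Fin T, B i j =
      if i = j then (if (i : ℕ) = T - 1 then 1 else 2)
      else if (i : ℕ) + 1 = (j : ℕ) ∨ (j : ℕ) + 1 = (i : ℕ) then -1 else 0)
    (xs : ℕ → ℝ) (hxs0 : xs 0 = 0)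
    (xstar : Fin T → ℝ) (hxstar : ∀ i : Fin T, xstar i = xs ((i : ℕ) + 1)) :
    (∀ x : Fin T → ℝ,
      μ / (2 * (μ + 4)) * dotProduct xstar (B.mulVec xstar) ≤
        μ / 2 * ∑ i : Fin T, (x i - xstar i) ^ 2
          + 1 / 2 * dotProduct x (B.mulVec x)) ∧
    μ / (2 * (μ + 4)) * dotProduct xstar (B.mulVec xstar) =
      μ / (2 * (μ + 4)) * ∑ t ∈ Finset.Icc 1 T, (xs t - xs (t - 1)) ^ 2 := by
  obtain rfl : B = switchingCostMatrix T := Matrix.ext hB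
  obtain rfl : xstar = fun j : Fin T => xs ((j : ℕ) + 1) := funext hxstar
  rw [dotProduct_switchingCostMatrix_mulVec xs hxs0]
  refine ⟨fun x => ?_, ?_⟩
  · obtain ⟨e, he0, rfl⟩ := exists_eq_comp_add_one x
    rw [dotProduct_switchingCostMatrix_mulVec e he0]
    apply mul_sum_sq_le_of_sum_sq_sub_le _ hμ
    calc ∑ t ∈ range T, ((e (t + 1) - e t) - (xs (t + 1) - xs t)) ^ 2
        = ∑ t ∈ range T, ((e - xs) (t + 1) - (e - xs) t) ^ 2 :=
          sum_congr rfl fun t _ => by simp only [Pi.sub_apply]; ring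
      _ ≤ 4 * ∑ t ∈ range T, (e - xs) (t + 1) ^ 2 :=
          sum_sq_sub_le_four_mul_sum_sq T _ (by simp [he0, hxs0])
      _ = 4 * ∑ i : Fin T, (e (i + 1) - xs (i + 1)) ^ 2 := by
          rw [← Fin.sum_univ_eq_sum_range (fun t => (e - xs) (t + 1) ^ 2)]
          rfl
  · rw [← Ico_add_one_right_eq_Icc, sum_Ico_eq_sum_range, Nat.add_sub_cancel]
    simp only [add_comm 1, Nat.add_sub_cancel]
end

section
/- For every T ≥ 1, every μ-strongly convex family (f_t)_{t=1}^T with minimizers x⋆_t over a closed convex set X containing 0, the optimal offline cost for OCO with quadratic switching cost is lower bounded: min over (x_t) in X of ∑_{t=1}^T [f_t(x_t) + (1/2)‖x_t - x_{t-1}‖²] ≥ ∑_{t=1}^T f_t(x⋆_t) + (μ/(2(μ+4)))(∑_{t=2}^T ‖x⋆_t - x⋆_{t-1}‖² + ‖x⋆_1‖²), where x_0 = 0. -/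
/-!
Each `f t` is `μ`-strongly convex, so it grows quadratically away from its constrained minimiser:
`f t (x t) ≥ f t (x⋆ t) + μ/2 ‖x t - x⋆ t‖²`. The distance `‖x⋆ t - x⋆ (t-1)‖` is bounded by the
detour `‖x⋆ t - x t‖ + ‖x t - x (t-1)‖ + ‖x (t-1) - x⋆ (t-1)‖` (with `x⋆ 0 = x 0 = 0`), and a
weighted Cauchy–Schwarz inequality trades its square for the growth terms and the switching cost.
Each growth term is charged twice, once at `t` and once at `t + 1`, so it is split in halves.
-/

open Finset

section InnerProductSpace

variable {E : Type*} [NormedAddCommGroup E] [InnerProductSpace ℝ E] {s : Set E} {μ : ℝ}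
  {f : E → ℝ}

lemma strongConvexOn_of_add_inner_le {g : E → E} (hs : Convex ℝ s)
    (h : ∀ x ∈ s, ∀ y ∈ s, f x + inner ℝ (g x) (y - x) + μ / 2 * ‖y - x‖ ^ 2 ≤ f y) :
    StrongConvexOn s μ f := by
  refine ⟨hs, fun x hx y hy a b ha hb hab => ?_⟩
  have hz : a • x + b • y ∈ s := hs hx hy ha hb hab
  obtain rfl : b = 1 - a := by linarith
  have hxz : x - (a • x + (1 - a) • y) = (1 - a) • (x - y) := by module
  have hyz : y - (a • x + (1 - a) • y) = (-a) • (x - y) := by module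
  have hx' := h _ hz x hx
  have hy' := h _ hz y hy
  rw [hxz, inner_smul_right, norm_smul, Real.norm_of_nonneg hb] at hx'
  rw [hyz, inner_smul_right, norm_smul, norm_neg, Real.norm_of_nonneg ha] at hy'
  simp only [smul_eq_mul]
  -- In the `a`/`(1 - a)` combination of the two inequalities the inner products cancel.
  nlinarith [mul_le_mul_of_nonneg_left hx' ha, mul_le_mul_of_nonneg_left hy' hb]

lemma StrongConvexOn.add_le_of_isMinOn (hf : StrongConvexOn s μ f) {x y : E} (hx : x ∈ s)
    (hy : y ∈ s) (hmin : IsMinOn f s x) : f x + μ / 2 * ‖y - x‖ ^ 2 ≤ f y := by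
  -- Minimality at the point `(1 - l) • x + l • y` gives `f x + (1 - l) μ/2 ‖y - x‖² ≤ f y`; let `l → 0⁺`.
  have hlim : Filter.Tendsto (fun l : ℝ => f x + (1 - l) * (μ / 2 * ‖y - x‖ ^ 2))
      (nhdsWithin 0 (Set.Ioi 0)) (nhds (f x + μ / 2 * ‖y - x‖ ^ 2)) := by
    refine tendsto_nhdsWithin_of_tendsto_nhds (Continuous.tendsto' ?_ 0 _ (by simp))
    fun_prop
  refine le_of_tendsto hlim ?_
  filter_upwards [Ioo_mem_nhdsGT (zero_lt_one' ℝ)] with l ⟨hl0, hl1⟩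
  have hconv := hf.2 hx hy (sub_nonneg.2 hl1.le) hl0.le (by ring)
  have hle := hmin (hf.1 hx hy (sub_nonneg.2 hl1.le) hl0.le (by ring))
  simp only [Set.mem_ofPred_eq, smul_eq_mul] at hconv hle
  rw [norm_sub_rev] at hconv
  nlinarith

end InnerProductSpace

lemma mul_sq_add_add_le {μ : ℝ} (hμ : 0 < μ) (a b c : ℝ) :
    μ / (2 * (μ + 4)) * (a + b + c) ^ 2 ≤ μ / 4 * a ^ 2 + 1 / 2 * b ^ 2 + μ / 4 * c ^ 2 := by
  -- Cauchy–Schwarz with weights `μ/4, 1/2, μ/4`, whose reciprocals sum to `2 (μ + 4) / μ`.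
  rw [div_mul_eq_mul_div, div_le_iff₀ (by positivity)]
  nlinarith [sq_nonneg (4 * b - μ * (a + c)), mul_nonneg hμ.le (sq_nonneg (a - c)),
    mul_nonneg (mul_nonneg hμ.le hμ.le) (sq_nonneg (a - c))]

lemma sum_Icc_sub_one_add {M : Type*} [AddCommMonoid M] (u : ℕ → M) (T : ℕ) :
    ∑ t ∈ Icc 1 T, u (t - 1) + u T = u 0 + ∑ t ∈ Icc 1 T, u t := by
  induction T with
  | zero => simp [add_comm]
  | succ T ih =>
    rw [sum_Icc_succ_top (by omega), sum_Icc_succ_top (by omega),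
      Nat.add_sub_cancel, ih, add_assoc]

lemma mul_sum_sq_dist_sub_one_le {α : Type*} [PseudoMetricSpace α] {μ : ℝ} (hμ : 0 < μ)
    (x y : ℕ → α) (h0 : x 0 = y 0) (T : ℕ) :
    μ / (2 * (μ + 4)) * ∑ t ∈ Icc 1 T, dist (y t) (y (t - 1)) ^ 2 ≤
      ∑ t ∈ Icc 1 T, (μ / 2 * dist (x t) (y t) ^ 2 + 1 / 2 * dist (x t) (x (t - 1)) ^ 2) := by
  have hstep : ∀ t ∈ Icc 1 T, μ / (2 * (μ + 4)) * dist (y t) (y (t - 1)) ^ 2 ≤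
      μ / 4 * dist (x t) (y t) ^ 2 + 1 / 2 * dist (x t) (x (t - 1)) ^ 2
        + μ / 4 * dist (x (t - 1)) (y (t - 1)) ^ 2 := by
    intro t _
    have htri := dist_triangle4 (y t) (x t) (x (t - 1)) (y (t - 1))
    rw [dist_comm (y t) (x t)] at htri
    calc _ ≤ μ / (2 * (μ + 4)) * (dist (x t) (y t) + dist (x t) (x (t - 1))
            + dist (x (t - 1)) (y (t - 1))) ^ 2 := by gcongr
      _ ≤ _ := mul_sq_add_add_le hμ _ _ _
  have hshift : ∑ t ∈ Icc 1 T, dist (x (t - 1)) (y (t - 1)) ^ 2 ≤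
      ∑ t ∈ Icc 1 T, dist (x t) (y t) ^ 2 := by
    have := sum_Icc_sub_one_add (fun t => dist (x t) (y t) ^ 2) T
    simp only [h0, dist_self] at this
    nlinarith [sq_nonneg (dist (x T) (y T))]
  rw [mul_sum]
  refine (sum_le_sum hstep).trans ?_
  simp only [sum_add_distrib, ← mul_sum]
  nlinarith

theorem opt_cost_lower_bound_quadratic_general
    (d T : ℕ) (hT : 1 ≤ T) (μ : ℝ) (hμ : 0 < μ)
    (X : Set (EuclideanSpace ℝ (Fin d)))
    (hXconvex : Convex ℝ X)
    (f : ℕ → EuclideanSpace ℝ (Fin d) → ℝ)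
    (g : ℕ → EuclideanSpace ℝ (Fin d) → EuclideanSpace ℝ (Fin d))
    (hsc : ∀ t, 1 ≤ t → t ≤ T → ∀ x ∈ X, ∀ y ∈ X,
      f t x + (inner ℝ (g t x) (y - x) : ℝ) + μ / 2 * ‖y - x‖ ^ 2 ≤ f t y)
    (xstar : ℕ → EuclideanSpace ℝ (Fin d))
    (hxstarX : ∀ t, 1 ≤ t → t ≤ T → xstar t ∈ X)
    (hmin : ∀ t, 1 ≤ t → t ≤ T → ∀ x ∈ X, f t (xstar t) ≤ f t x) :
    ∀ x : ℕ → EuclideanSpace ℝ (Fin d), x 0 = 0 → (∀ t, 1 ≤ t → t ≤ T → x t ∈ X) →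
      ∑ t ∈ Finset.Icc 1 T, f t (xstar t)
        + μ / (2 * (μ + 4)) *
            (∑ t ∈ Finset.Icc 2 T, ‖xstar t - xstar (t - 1)‖ ^ 2 + ‖xstar 1‖ ^ 2) ≤
      ∑ t ∈ Finset.Icc 1 T, (f t (x t) + 1 / 2 * ‖x t - x (t - 1)‖ ^ 2) := by
  intro x hx0 hxX
  set y := Function.update xstar 0 0
  have hy : ∀ t, 1 ≤ t → y t = xstar t := fun t ht => Function.update_of_ne (by omega) _ _
  have hpath : ∑ t ∈ Icc 2 T, ‖xstar t - xstar (t - 1)‖ ^ 2 + ‖xstar 1‖ ^ 2 =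
      ∑ t ∈ Icc 1 T, ‖y t - y (t - 1)‖ ^ 2 := by
    rw [← insert_Icc_add_one_left_eq_Icc hT, sum_insert (by simp), add_comm]
    congr 1
    · simp [y]
    · refine sum_congr rfl fun t ht => ?_
      rw [hy t (by grind), hy (t - 1) (by grind)]
  have hgrowth : ∀ t ∈ Icc 1 T, f t (xstar t) + μ / 2 * ‖x t - y t‖ ^ 2 ≤ f t (x t) := by
    intro t ht
    obtain ⟨h1, h2⟩ := mem_Icc.1 ht
    rw [hy t h1]
    exact (strongConvexOn_of_add_inner_le hXconvex (hsc t h1 h2)).add_le_of_isMinOn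
      (hxstarX t h1 h2) (hxX t h1 h2) (isMinOn_iff.2 (hmin t h1 h2))
  have hmove := mul_sum_sq_dist_sub_one_le hμ x y (by simp [y, hx0]) T
  simp only [dist_eq_norm] at hmove
  rw [hpath]
  calc _ ≤ ∑ t ∈ Icc 1 T, f t (xstar t) +
        ∑ t ∈ Icc 1 T, (μ / 2 * ‖x t - y t‖ ^ 2 + 1 / 2 * ‖x t - x (t - 1)‖ ^ 2) := by gcongr
    _ ≤ _ := by
      rw [← sum_add_distrib]
      exact sum_le_sum fun t ht => by linarith [hgrowth t ht]

theorem opt_cost_lower_bound_quadratic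
    (d T : ℕ) (hT : 1 ≤ T) (μ : ℝ) (hμ : 0 < μ)
    (X : Set (EuclideanSpace ℝ (Fin d)))
    (hXclosed : IsClosed X) (hXconvex : Convex ℝ X) (hX0 : (0 : EuclideanSpace ℝ (Fin d)) ∈ X)
    (f : ℕ → EuclideanSpace ℝ (Fin d) → ℝ)
    (g : ℕ → EuclideanSpace ℝ (Fin d) → EuclideanSpace ℝ (Fin d))
    (hfnonneg : ∀ t, 1 ≤ t → t ≤ T → ∀ x ∈ X, 0 ≤ f t x)
    (hsc : ∀ t, 1 ≤ t → t ≤ T → ∀ x ∈ X, ∀ y ∈ X,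
      f t x + (inner ℝ (g t x) (y - x) : ℝ) + μ / 2 * ‖y - x‖ ^ 2 ≤ f t y)
    (xstar : ℕ → EuclideanSpace ℝ (Fin d))
    (hxstarX : ∀ t, 1 ≤ t → t ≤ T → xstar t ∈ X)
    (hmin : ∀ t, 1 ≤ t → t ≤ T → ∀ x ∈ X, f t (xstar t) ≤ f t x) :
    ∀ x : ℕ → EuclideanSpace ℝ (Fin d), x 0 = 0 → (∀ t, 1 ≤ t → t ≤ T → x t ∈ X) →
      ∑ t ∈ Finset.Icc 1 T, f t (xstar t)
        + μ / (2 * (μ + 4)) *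
            (∑ t ∈ Finset.Icc 2 T, ‖xstar t - xstar (t - 1)‖ ^ 2 + ‖xstar 1‖ ^ 2) ≤
      ∑ t ∈ Finset.Icc 1 T, (f t (x t) + 1 / 2 * ‖x t - x (t - 1)‖ ^ 2) :=
  opt_cost_lower_bound_quadratic_general d T hT μ hμ X hXconvex f g hsc xstar hxstarX hmin
end
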